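/- arXiv:2308.09252 — 6 statements merged into one kernel-verified Lean document; each statement's English description precedes it below -/
import Mathlib

section
/- For bounded linear operators B and C on a complex Hilbert space H and any real θ, the Euclidean operator radius satisfies w_e(B,C) ≥ (1/√2) · w(B + e^{iθ} C). -/
open ContinuousLinearMap

noncomputable def nr {E : Type*} [NormedAddCommGroup E] [InnerProductSpace ℂ E]
    (T : E →L[ℂ] E) : ℝ :=
  sSup {r : ℝ | ∃ x : E, ‖x‖ = 1 ∧ r = ‖(inner ℂ (T x) x : ℂ)‖}

noncomputable def er {E : Type*} [NormedAddCommGroup E] [InnerProductSpace ℂ E]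
    (B C : E →L[ℂ] E) : ℝ :=
  sSup {r : ℝ | ∃ x : E, ‖x‖ = 1 ∧
    r = Real.sqrt (‖(inner ℂ (B x) x : ℂ)‖ ^ 2 + ‖(inner ℂ (C x) x : ℂ)‖ ^ 2)}

/-!
For a unit vector `x` put `b = |⟨Bx,x⟩|` and `c = |⟨Cx,x⟩|`. The triangle inequality gives
`|⟨(B + e^{iθ}C)x,x⟩| ≤ b + c`, and `(b + c)² ≤ 2(b² + c²)` turns this into
`|⟨(B + e^{iθ}C)x,x⟩| ≤ √2 · √(b² + c²) ≤ √2 · w_e(B,C)`; take the supremum over `x`.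
-/

open scoped InnerProductSpace

section InnerApplySelf

variable {𝕜 E : Type*} [RCLike 𝕜] [NormedAddCommGroup E] [InnerProductSpace 𝕜 E]

theorem norm_inner_apply_self_le_opNorm (T : E →L[𝕜] E) {x : E} (hx : ‖x‖ = 1) :
    ‖⟪T x, x⟫_𝕜‖ ≤ ‖T‖ :=
  calc ‖⟪T x, x⟫_𝕜‖ ≤ ‖T x‖ * ‖x‖ := norm_inner_le_norm _ _
    _ ≤ ‖T‖ * ‖x‖ * ‖x‖ := by gcongr; exact T.le_opNorm x
    _ = ‖T‖ := by rw [hx, mul_one, mul_one]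

theorem norm_inner_add_smul_apply_self_le (B C : E →L[𝕜] E) (c : 𝕜) (x : E) :
    ‖⟪(B + c • C) x, x⟫_𝕜‖ ≤ ‖⟪B x, x⟫_𝕜‖ + ‖c‖ * ‖⟪C x, x⟫_𝕜‖ := by
  rw [add_apply, smul_apply, inner_add_left, inner_smul_left]
  grw [norm_add_le, norm_mul, RCLike.norm_conj]

end InnerApplySelf

theorem add_le_sqrt_two_mul_sqrt_sq_add_sq (a b : ℝ) :
    a + b ≤ √2 * √(a ^ 2 + b ^ 2) := by
  rw [← Real.sqrt_mul zero_le_two]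
  exact Real.le_sqrt_of_sq_le add_sq_le

theorem sqrt_sq_add_sq_le_add {a b : ℝ} (ha : 0 ≤ a) (hb : 0 ≤ b) :
    √(a ^ 2 + b ^ 2) ≤ a + b :=
  Real.sqrt_le_iff.mpr ⟨by positivity, by nlinarith⟩

section EuclideanOperatorRadius

variable {E : Type*} [NormedAddCommGroup E] [InnerProductSpace ℂ E]

theorem er_nonneg (B C : E →L[ℂ] E) : 0 ≤ er B C :=
  Real.sSup_nonneg fun _ ⟨_, _, hr⟩ ↦ hr ▸ Real.sqrt_nonneg _

theorem sqrt_norm_inner_sq_add_le_er (B C : E →L[ℂ] E) {x : E} (hx : ‖x‖ = 1) :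
    √(‖⟪B x, x⟫_ℂ‖ ^ 2 + ‖⟪C x, x⟫_ℂ‖ ^ 2) ≤ er B C := by
  refine le_csSup ⟨‖B‖ + ‖C‖, ?_⟩ ⟨x, hx, rfl⟩
  rintro r ⟨y, hy, rfl⟩
  grw [sqrt_sq_add_sq_le_add (norm_nonneg _) (norm_nonneg _),
    norm_inner_apply_self_le_opNorm B hy, norm_inner_apply_self_le_opNorm C hy]

theorem nr_add_smul_le_sqrt_two_mul_er (B C : E →L[ℂ] E) {c : ℂ} (hc : ‖c‖ = 1) :
    nr (B + c • C) ≤ √2 * er B C := by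
  refine Real.sSup_le ?_ (mul_nonneg (Real.sqrt_nonneg 2) (er_nonneg B C))
  rintro r ⟨x, hx, rfl⟩
  calc ‖⟪(B + c • C) x, x⟫_ℂ‖ ≤ ‖⟪B x, x⟫_ℂ‖ + ‖⟪C x, x⟫_ℂ‖ :=
        (norm_inner_add_smul_apply_self_le B C c x).trans_eq (by rw [hc, one_mul])
    _ ≤ √2 * √(‖⟪B x, x⟫_ℂ‖ ^ 2 + ‖⟪C x, x⟫_ℂ‖ ^ 2) :=
        add_le_sqrt_two_mul_sqrt_sq_add_sq _ _
    _ ≤ √2 * er B C := by grw [sqrt_norm_inner_sq_add_le_er B C hx]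

end EuclideanOperatorRadius

theorem stmt_1_general {H : Type*} [NormedAddCommGroup H] [InnerProductSpace ℂ H]
    (B C : H →L[ℂ] H) (θ : ℝ) :
    er B C ≥ (1 / Real.sqrt 2) * nr (B + Complex.exp (θ * Complex.I) • C) := by
  rw [ge_iff_le, one_div_mul_eq_div, div_le_iff₀' (by positivity)]
  exact nr_add_smul_le_sqrt_two_mul_er B C (Complex.norm_exp_ofReal_mul_I θ)

theorem stmt_1 {H : Type*} [NormedAddCommGroup H] [InnerProductSpace ℂ H] [CompleteSpace H]
    (B C : H →L[ℂ] H) (θ : ℝ) :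
    er B C ≥ (1 / Real.sqrt 2) * nr (B + Complex.exp (θ * Complex.I) • C) :=
  stmt_1_general B C θ
end

section
/- For a bounded linear operator T on a complex Hilbert space H, w(T)² ≥ (1/8)·‖T*T + TT*‖ + (1/4)·(‖Re(T)‖² + ‖Im(T)‖²) + (1/2)·|‖Re(T)‖² − ‖Im(T)‖²|. -/
open ContinuousLinearMap

/-! Write `A = Re T` and `B = Im T`. Both are self-adjoint, and `⟪A x, x⟫`, `⟪B x, x⟫` are (up to
sign) the real and imaginary parts of `⟪T x, x⟫`; since the norm of a self-adjoint operator is the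
supremum of its quadratic form on the unit sphere, `‖A‖, ‖B‖ ≤ w(T)`. As
`T* T + T T* = 2 (A² + B²)`, the right-hand side is at most
`(‖A‖² + ‖B‖²) / 2 + |‖A‖² - ‖B‖²| / 2 = max ‖A‖² ‖B‖² ≤ w(T)²`. -/

open ComplexStarModule

namespace ContinuousLinearMap

variable {𝕜 E : Type*} [RCLike 𝕜] [NormedAddCommGroup E] [InnerProductSpace 𝕜 E]

theorem norm_inner_apply_self_le_opNorm (T : E →L[𝕜] E) {x : E} (hx : ‖x‖ = 1) :
    ‖inner 𝕜 (T x) x‖ ≤ ‖T‖ :=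
  calc ‖inner 𝕜 (T x) x‖ ≤ ‖T x‖ * ‖x‖ := norm_inner_le_norm _ _
    _ ≤ ‖T‖ * ‖x‖ * ‖x‖ := by gcongr; exact T.le_opNorm x
    _ = ‖T‖ := by rw [hx, mul_one, mul_one]

theorem norm_le_of_abs_re_inner_self_le {S : E →L[𝕜] E}
    (hS : (S : E →ₗ[𝕜] E).IsSymmetric) {c : ℝ} (hc : 0 ≤ c)
    (h : ∀ x, |RCLike.re (inner 𝕜 (S x) x)| ≤ c * ‖x‖ ^ 2) : ‖S‖ ≤ c := by
  rw [S.norm_eq_iSup_rayleighQuotient hS]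
  refine ciSup_le fun x ↦ ?_
  rw [rayleighQuotient, reApplyInnerSelf_apply, abs_div, abs_sq]
  exact div_le_of_le_mul₀ (sq_nonneg _) hc (h x)

end ContinuousLinearMap

section NumericalRadius

variable {E : Type*} [NormedAddCommGroup E] [InnerProductSpace ℂ E]

theorem nr_nonneg (T : E →L[ℂ] E) : 0 ≤ nr T :=
  Real.sSup_nonneg fun _ ⟨_, _, hr⟩ ↦ hr ▸ norm_nonneg _

theorem norm_inner_apply_self_le_nr (T : E →L[ℂ] E) (x : E) :
    ‖inner ℂ (T x) x‖ ≤ nr T * ‖x‖ ^ 2 := by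
  rcases eq_or_ne x 0 with rfl | hx
  · simp
  have hbdd : BddAbove {r : ℝ | ∃ x : E, ‖x‖ = 1 ∧ r = ‖inner ℂ (T x) x‖} := by
    refine ⟨‖T‖, ?_⟩
    rintro _ ⟨y, hy, rfl⟩
    exact T.norm_inner_apply_self_le_opNorm hy
  have hunit := le_csSup hbdd ⟨_, norm_smul_inv_norm (𝕜 := ℂ) hx, rfl⟩
  have hx' : ‖x‖ ≠ 0 := norm_ne_zero_iff.mpr hx
  rw [map_smul, inner_smul_left, inner_smul_right, norm_mul, norm_mul, Complex.norm_conj,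
    norm_inv, RCLike.norm_ofReal, abs_norm] at hunit
  calc ‖inner ℂ (T x) x‖ = ‖x‖⁻¹ * (‖x‖⁻¹ * ‖inner ℂ (T x) x‖) * ‖x‖ ^ 2 := by field_simp
    _ ≤ nr T * ‖x‖ ^ 2 := by gcongr; exact hunit

end NumericalRadius

section StarModule

variable {A : Type*}

theorem realPart_eq_inv_two_smul [AddCommGroup A] [Module ℂ A] [StarAddMonoid A]
    [StarModule ℂ A] (a : A) : (ℜ a : A) = (2 : ℂ)⁻¹ • (a + star a) := by
  rw [realPart_apply_coe, ← Complex.coe_smul]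
  norm_num

theorem imaginaryPart_eq_inv_two_I_smul [AddCommGroup A] [Module ℂ A] [StarAddMonoid A]
    [StarModule ℂ A] (a : A) : (ℑ a : A) = (2 * Complex.I)⁻¹ • (a - star a) := by
  rw [imaginaryPart_apply_coe, ← Complex.coe_smul, smul_smul, mul_inv, Complex.inv_I]
  congr 1
  push_cast
  ring

theorem norm_star_mul_self_add_self_mul_star_le [NonUnitalNormedRing A] [StarRing A] [Module ℂ A]
    [IsScalarTower ℂ A A] [SMulCommClass ℂ A A] [StarModule ℂ A] (a : A) :
    ‖star a * a + a * star a‖ ≤ 2 * (‖(ℜ a : A)‖ ^ 2 + ‖(ℑ a : A)‖ ^ 2) := by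
  rw [star_mul_self_add_self_mul_star]
  calc ‖2 • ((ℜ a : A) * ℜ a + ℑ a * ℑ a)‖ ≤ 2 * (‖(ℜ a : A) * ℜ a‖ + ‖(ℑ a : A) * ℑ a‖) := by
        grw [norm_nsmul_le, norm_add_le]
        norm_num
    _ ≤ 2 * (‖(ℜ a : A)‖ ^ 2 + ‖(ℑ a : A)‖ ^ 2) := by
        rw [sq, sq]; gcongr <;> exact norm_mul_le _ _

end StarModule

section CartesianDecomposition

variable {H : Type*} [NormedAddCommGroup H] [InnerProductSpace ℂ H] [CompleteSpace H]

theorem re_inner_realPart_apply_self (T : H →L[ℂ] H) (x : H) :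
    (inner ℂ ((ℜ T : H →L[ℂ] H) x) x).re = (inner ℂ (T x) x).re := by
  rw [realPart_eq_inv_two_smul, star_eq_adjoint, smul_apply, add_apply, inner_smul_left,
    inner_add_left, adjoint_inner_left, ← inner_conj_symm x (T x), Complex.add_conj]
  norm_num
  ring

theorem re_inner_imaginaryPart_apply_self (T : H →L[ℂ] H) (x : H) :
    (inner ℂ ((ℑ T : H →L[ℂ] H) x) x).re = -(inner ℂ (T x) x).im := by
  rw [imaginaryPart_eq_inv_two_I_smul, star_eq_adjoint, smul_apply, sub_apply, inner_smul_left,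
    inner_sub_left, adjoint_inner_left, ← inner_conj_symm x (T x), Complex.sub_conj]
  norm_num
  ring

theorem norm_realPart_le_nr (T : H →L[ℂ] H) : ‖(ℜ T : H →L[ℂ] H)‖ ≤ nr T :=
  norm_le_of_abs_re_inner_self_le (ℜ T).2.isSymmetric (nr_nonneg T) fun x ↦ by
    rw [RCLike.re_to_complex, re_inner_realPart_apply_self]
    exact (Complex.abs_re_le_norm _).trans (norm_inner_apply_self_le_nr T x)

theorem norm_imaginaryPart_le_nr (T : H →L[ℂ] H) : ‖(ℑ T : H →L[ℂ] H)‖ ≤ nr T :=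
  norm_le_of_abs_re_inner_self_le (ℑ T).2.isSymmetric (nr_nonneg T) fun x ↦ by
    rw [RCLike.re_to_complex, re_inner_imaginaryPart_apply_self, abs_neg]
    exact (Complex.abs_im_le_norm _).trans (norm_inner_apply_self_le_nr T x)

end CartesianDecomposition

theorem stmt_6 {H : Type*} [NormedAddCommGroup H] [InnerProductSpace ℂ H] [CompleteSpace H]
    (T : H →L[ℂ] H) :
    nr T ^ 2 ≥ (1 / 8) * ‖adjoint T * T + T * adjoint T‖
      + (1 / 4) * (‖(2 : ℂ)⁻¹ • (T + adjoint T)‖ ^ 2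
                   + ‖(2 * Complex.I)⁻¹ • (T - adjoint T)‖ ^ 2)
      + (1 / 2) * |‖(2 : ℂ)⁻¹ • (T + adjoint T)‖ ^ 2
                   - ‖(2 * Complex.I)⁻¹ • (T - adjoint T)‖ ^ 2| := by
  have hsum := norm_star_mul_self_add_self_mul_star_le T
  have hRe := pow_le_pow_left₀ (norm_nonneg _) (norm_realPart_le_nr T) 2
  have hIm := pow_le_pow_left₀ (norm_nonneg _) (norm_imaginaryPart_le_nr T) 2
  simp only [realPart_eq_inv_two_smul, imaginaryPart_eq_inv_two_I_smul, star_eq_adjoint] at hsum hRe hIm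
  rcases abs_cases (‖(2 : ℂ)⁻¹ • (T + adjoint T)‖ ^ 2 - ‖(2 * Complex.I)⁻¹ • (T - adjoint T)‖ ^ 2)
    with ⟨habs, -⟩ | ⟨habs, -⟩ <;> rw [habs] <;> linarith
end

section
/- For a bounded linear operator T on a complex Hilbert space H, w(T)² ≤ (1/4)·‖T*T + TT*‖ + (1/2)·(‖Re(T)‖² + ‖Im(T)‖²). -/
open ContinuousLinearMap

/-!
Write `T = B + iC` with `B = Re T`, `C = Im T` self-adjoint. For a unit vector `x`,
`|⟨Tx, x⟩|² = ⟨Bx, x⟩² + ⟨Cx, x⟩²`, and for any operator `S`,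
`|⟨Sx, x⟩|² ≤ ‖Sx‖ ‖S‖ ≤ (‖Sx‖² + ‖S‖²) / 2`. By the parallelogram law,
`‖Bx‖² + ‖Cx‖² = (‖Tx‖² + ‖T*x‖²) / 2 = ⟨(T*T + TT*)x, x⟩ / 2 ≤ ‖T*T + TT*‖ / 2`.
-/

open scoped InnerProductSpace ComplexConjugate

theorem nr_sq_le_of_forall {E : Type*} [NormedAddCommGroup E] [InnerProductSpace ℂ E]
    {T : E →L[ℂ] E} {R : ℝ} (hR : 0 ≤ R) (h : ∀ x : E, ‖x‖ = 1 → ‖⟪T x, x⟫_ℂ‖ ^ 2 ≤ R) :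
    nr T ^ 2 ≤ R := by
  have hnr : 0 ≤ nr T := Real.sSup_nonneg <| by
    rintro r ⟨x, -, rfl⟩
    exact norm_nonneg _
  have : nr T ≤ √R := Real.sSup_le (by
    rintro r ⟨x, hx, rfl⟩
    exact Real.le_sqrt_of_sq_le (h x hx)) (Real.sqrt_nonneg R)
  calc nr T ^ 2 ≤ √R ^ 2 := pow_le_pow_left₀ hnr this 2
    _ = R := Real.sq_sqrt hR

section
variable {𝕜 E : Type*} [RCLike 𝕜] [NormedAddCommGroup E] [InnerProductSpace 𝕜 E]

theorem norm_inner_apply_self_le_norm_apply (S : E →L[𝕜] E) {x : E} (hx : ‖x‖ = 1) :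
    ‖⟪S x, x⟫_𝕜‖ ≤ ‖S x‖ := by
  simpa [hx] using norm_inner_le_norm (𝕜 := 𝕜) (S x) x

theorem norm_inner_apply_self_sq_le (S : E →L[𝕜] E) {x : E} (hx : ‖x‖ = 1) :
    ‖⟪S x, x⟫_𝕜‖ ^ 2 ≤ (‖S x‖ ^ 2 + ‖S‖ ^ 2) / 2 := by
  have h₁ := norm_inner_apply_self_le_norm_apply S hx
  have h₂ : ‖S x‖ ≤ ‖S‖ := S.unit_le_opNorm x hx.le
  nlinarith [norm_nonneg ⟪S x, x⟫_𝕜, sq_nonneg (‖S x‖ - ‖S‖)]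

end

section
variable {H : Type*} [NormedAddCommGroup H] [InnerProductSpace ℂ H] [CompleteSpace H]

theorem inner_adjoint_apply_self (T : H →L[ℂ] H) (x : H) :
    ⟪adjoint T x, x⟫_ℂ = conj ⟪T x, x⟫_ℂ := by
  rw [adjoint_inner_left, inner_conj_symm]

theorem inner_realPart_apply_self (T : H →L[ℂ] H) (x : H) :
    ⟪((2 : ℂ)⁻¹ • (T + adjoint T)) x, x⟫_ℂ = (⟪T x, x⟫_ℂ).re := by
  rw [smul_apply, add_apply, inner_smul_left, inner_add_left, inner_adjoint_apply_self,
    Complex.add_conj, map_inv₀, map_ofNat]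
  push_cast
  field_simp

theorem inner_imaginaryPart_apply_self (T : H →L[ℂ] H) (x : H) :
    ⟪((2 * Complex.I)⁻¹ • (T - adjoint T)) x, x⟫_ℂ = -(⟪T x, x⟫_ℂ).im := by
  rw [smul_apply, sub_apply, inner_smul_left, inner_sub_left, inner_adjoint_apply_self,
    Complex.sub_conj, map_inv₀, map_mul, map_ofNat, Complex.conj_I]
  push_cast
  field_simp

theorem sq_norm_inner_apply_self_eq (T : H →L[ℂ] H) (x : H) :
    ‖⟪T x, x⟫_ℂ‖ ^ 2 = ‖⟪((2 : ℂ)⁻¹ • (T + adjoint T)) x, x⟫_ℂ‖ ^ 2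
      + ‖⟪((2 * Complex.I)⁻¹ • (T - adjoint T)) x, x⟫_ℂ‖ ^ 2 := by
  rw [inner_realPart_apply_self, inner_imaginaryPart_apply_self, Complex.sq_norm,
    Complex.normSq_apply]
  simp [← sq]

theorem norm_sq_realPart_apply_add_norm_sq_imaginaryPart_apply (T : H →L[ℂ] H) (x : H) :
    ‖((2 : ℂ)⁻¹ • (T + adjoint T)) x‖ ^ 2 + ‖((2 * Complex.I)⁻¹ • (T - adjoint T)) x‖ ^ 2
      = (‖T x‖ ^ 2 + ‖adjoint T x‖ ^ 2) / 2 := by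
  have := parallelogram_law_with_norm ℂ (T x) (adjoint T x)
  simp only [smul_apply, add_apply, sub_apply, norm_smul, norm_inv, norm_mul, Complex.norm_I]
  norm_num
  linarith

theorem norm_sq_apply_add_norm_sq_adjoint_apply_le (T : H →L[ℂ] H) {x : H} (hx : ‖x‖ = 1) :
    ‖T x‖ ^ 2 + ‖adjoint T x‖ ^ 2 ≤ ‖adjoint T * T + T * adjoint T‖ := by
  calc ‖T x‖ ^ 2 + ‖adjoint T x‖ ^ 2 = RCLike.re ⟪(adjoint T * T + T * adjoint T) x, x⟫_ℂ := by
        rw [apply_norm_sq_eq_inner_adjoint_left, apply_norm_sq_eq_inner_adjoint_left,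
          adjoint_adjoint, add_apply, inner_add_left, map_add, mul_def, mul_def]
    _ ≤ ‖⟪(adjoint T * T + T * adjoint T) x, x⟫_ℂ‖ := RCLike.re_le_norm _
    _ ≤ ‖adjoint T * T + T * adjoint T‖ :=
        (norm_inner_apply_self_le_norm_apply _ hx).trans (unit_le_opNorm _ x hx.le)

end

theorem stmt_10 {H : Type*} [NormedAddCommGroup H] [InnerProductSpace ℂ H] [CompleteSpace H]
    (T : H →L[ℂ] H) :
    nr T ^ 2 ≤ (1 / 4) * ‖adjoint T * T + T * adjoint T‖
      + (1 / 2) * (‖(2 : ℂ)⁻¹ • (T + adjoint T)‖ ^ 2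
                   + ‖(2 * Complex.I)⁻¹ • (T - adjoint T)‖ ^ 2) := by
  set B : H →L[ℂ] H := (2 : ℂ)⁻¹ • (T + adjoint T)
  set C : H →L[ℂ] H := (2 * Complex.I)⁻¹ • (T - adjoint T)
  refine nr_sq_le_of_forall (by positivity) fun x hx => ?_
  calc ‖⟪T x, x⟫_ℂ‖ ^ 2 = ‖⟪B x, x⟫_ℂ‖ ^ 2 + ‖⟪C x, x⟫_ℂ‖ ^ 2 := sq_norm_inner_apply_self_eq T x
    _ ≤ (‖B x‖ ^ 2 + ‖B‖ ^ 2) / 2 + (‖C x‖ ^ 2 + ‖C‖ ^ 2) / 2 :=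
        add_le_add (norm_inner_apply_self_sq_le B hx) (norm_inner_apply_self_sq_le C hx)
    _ = (‖T x‖ ^ 2 + ‖adjoint T x‖ ^ 2) / 4 + (1 / 2) * (‖B‖ ^ 2 + ‖C‖ ^ 2) := by
        linear_combination
          (1 / 2 : ℝ) * norm_sq_realPart_apply_add_norm_sq_imaginaryPart_apply T x
    _ ≤ (1 / 4) * ‖adjoint T * T + T * adjoint T‖ + (1 / 2) * (‖B‖ ^ 2 + ‖C‖ ^ 2) := by
        linarith [norm_sq_apply_add_norm_sq_adjoint_apply_le T hx]
end

section
/- For a bounded linear operator T on a complex Hilbert space H, w(T)² ≤ (1/4)·‖T*T + TT*‖ + (1/4)·(‖Re(T)+Im(T)‖² + ‖Re(T)−Im(T)‖²). -/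
/-!
Write `A = Re T` and `B = Im T`, so that `A` and `B` are self-adjoint, `T = A + iB` and
`T* = A - iB`. For a unit vector `x`, `⟨Ax, x⟩` and `⟨Bx, x⟩` are the real and (up to sign)
imaginary parts of `⟨Tx, x⟩`, hence `|⟨Tx, x⟩|² ≤ ‖Ax‖² + ‖Bx‖²`. The parallelogram law
writes `2 (‖Ax‖² + ‖Bx‖²)` both as `‖Tx‖² + ‖T*x‖² = Re ⟨(T*T + TT*) x, x⟩ ≤ ‖T*T + TT*‖`
and as `‖(A + B) x‖² + ‖(A - B) x‖² ≤ ‖A + B‖² + ‖A - B‖²`; averaging the two bounds gives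
the inequality.
-/

open ContinuousLinearMap

open Complex
open scoped InnerProductSpace

section

variable {H : Type*} [NormedAddCommGroup H] [InnerProductSpace ℂ H]

lemma nr_sq_le {T : H →L[ℂ] H} {c : ℝ} (hc : 0 ≤ c)
    (h : ∀ x : H, ‖x‖ = 1 → ‖⟪T x, x⟫_ℂ‖ ^ 2 ≤ c) : nr T ^ 2 ≤ c := by
  have hnr : nr T ≤ √c := by
    refine Real.sSup_le ?_ (Real.sqrt_nonneg c)
    rintro r ⟨x, hx, rfl⟩
    exact Real.le_sqrt_of_sq_le (h x hx)
  calc nr T ^ 2 ≤ √c ^ 2 := by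
        gcongr
        exact Real.sSup_nonneg fun r ⟨x, _, hr⟩ ↦ hr ▸ norm_nonneg _
    _ = c := Real.sq_sqrt hc

lemma norm_add_I_smul_apply_sq_add_norm_sub_I_smul_apply_sq (A B : H →L[ℂ] H) (x : H) :
    ‖(A + I • B) x‖ ^ 2 + ‖(A - I • B) x‖ ^ 2 = 2 * (‖A x‖ ^ 2 + ‖B x‖ ^ 2) := by
  simpa only [add_apply, sub_apply, smul_apply, norm_smul, norm_I, one_mul]
    using parallelogram_law_with_norm ℂ (A x) (I • B x)

lemma two_mul_norm_apply_sq_add_norm_apply_sq_le (A B : H →L[ℂ] H) (x : H) :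
    2 * (‖A x‖ ^ 2 + ‖B x‖ ^ 2) ≤ (‖A + B‖ ^ 2 + ‖A - B‖ ^ 2) * ‖x‖ ^ 2 := by
  rw [← parallelogram_law_with_norm ℂ (A x) (B x)]
  have hadd : ‖A x + B x‖ ≤ ‖A + B‖ * ‖x‖ := (A + B).le_opNorm x
  have hsub : ‖A x - B x‖ ≤ ‖A - B‖ * ‖x‖ := (A - B).le_opNorm x
  calc ‖A x + B x‖ ^ 2 + ‖A x - B x‖ ^ 2
      ≤ (‖A + B‖ * ‖x‖) ^ 2 + (‖A - B‖ * ‖x‖) ^ 2 := by gcongr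
    _ = (‖A + B‖ ^ 2 + ‖A - B‖ ^ 2) * ‖x‖ ^ 2 := by ring

variable [CompleteSpace H]

lemma norm_inner_add_I_smul_apply_sq_le {A B : H →L[ℂ] H} (hA : IsSelfAdjoint A)
    (hB : IsSelfAdjoint B) (x : H) :
    ‖⟪(A + I • B) x, x⟫_ℂ‖ ^ 2 ≤ (‖A x‖ ^ 2 + ‖B x‖ ^ 2) * ‖x‖ ^ 2 := by
  set a := re ⟪A x, x⟫_ℂ
  set b := re ⟪B x, x⟫_ℂ
  have ha : (a : ℂ) = ⟪A x, x⟫_ℂ := hA.isSymmetric.coe_re_inner_apply_self x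
  have hb : (b : ℂ) = ⟪B x, x⟫_ℂ := hB.isSymmetric.coe_re_inner_apply_self x
  have hab : ⟪(A + I • B) x, x⟫_ℂ = ⟨a, -b⟩ := by
    simp only [add_apply, smul_apply, inner_add_left, inner_smul_left, ← ha, ← hb]
    apply Complex.ext <;> simp
  have hax : |a| ≤ ‖A x‖ * ‖x‖ := by
    simpa [← ha] using norm_inner_le_norm (𝕜 := ℂ) (A x) x
  have hbx : |b| ≤ ‖B x‖ * ‖x‖ := by
    simpa [← hb] using norm_inner_le_norm (𝕜 := ℂ) (B x) x
  calc ‖⟪(A + I • B) x, x⟫_ℂ‖ ^ 2 = |a| ^ 2 + |b| ^ 2 := by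
        rw [hab, Complex.sq_norm, normSq_mk, sq_abs, sq_abs]; ring
    _ ≤ (‖A x‖ * ‖x‖) ^ 2 + (‖B x‖ * ‖x‖) ^ 2 := by gcongr
    _ = (‖A x‖ ^ 2 + ‖B x‖ ^ 2) * ‖x‖ ^ 2 := by ring

lemma adjoint_add_I_smul {A B : H →L[ℂ] H} (hA : IsSelfAdjoint A) (hB : IsSelfAdjoint B) :
    adjoint (A + I • B) = A - I • B := by
  rw [map_add, map_smulₛₗ, ← star_eq_adjoint, ← star_eq_adjoint, hA.star_eq, hB.star_eq,
    conj_I, neg_smul, sub_eq_add_neg]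

lemma norm_apply_sq_add_norm_adjoint_apply_sq_le (T : H →L[ℂ] H) (x : H) :
    ‖T x‖ ^ 2 + ‖adjoint T x‖ ^ 2 ≤ ‖adjoint T * T + T * adjoint T‖ * ‖x‖ ^ 2 := by
  calc ‖T x‖ ^ 2 + ‖adjoint T x‖ ^ 2 = RCLike.re ⟪(adjoint T * T + T * adjoint T) x, x⟫_ℂ := by
        rw [apply_norm_sq_eq_inner_adjoint_left T, apply_norm_sq_eq_inner_adjoint_left (adjoint T),
          adjoint_adjoint, add_apply, inner_add_left, map_add]
        rfl
    _ ≤ ‖(adjoint T * T + T * adjoint T) x‖ * ‖x‖ := re_inner_le_norm _ _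
    _ ≤ ‖adjoint T * T + T * adjoint T‖ * ‖x‖ * ‖x‖ := by gcongr; exact le_opNorm _ _
    _ = ‖adjoint T * T + T * adjoint T‖ * ‖x‖ ^ 2 := by ring

lemma isSelfAdjoint_two_inv_smul_add_adjoint (T : H →L[ℂ] H) :
    IsSelfAdjoint ((2 : ℂ)⁻¹ • (T + adjoint T)) := by
  rw [← star_eq_adjoint, IsSelfAdjoint, star_smul, star_add, star_star, add_comm]
  simp

lemma isSelfAdjoint_two_mul_I_inv_smul_sub_adjoint (T : H →L[ℂ] H) :
    IsSelfAdjoint ((2 * I)⁻¹ • (T - adjoint T)) := by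
  rw [← star_eq_adjoint, IsSelfAdjoint, star_smul, star_sub, star_star, ← neg_sub, smul_neg,
    ← neg_smul]
  congr 1
  simp

lemma two_inv_smul_add_adjoint_add_I_smul (T : H →L[ℂ] H) :
    (2 : ℂ)⁻¹ • (T + adjoint T) + I • (2 * I)⁻¹ • (T - adjoint T) = T := by
  rw [smul_smul, mul_inv_rev, ← mul_assoc, mul_inv_cancel₀ I_ne_zero, one_mul, ← smul_add,
    add_add_sub_cancel, ← two_smul ℂ T, smul_smul, inv_mul_cancel₀ two_ne_zero, one_smul]

lemma norm_inner_apply_self_sq_le_s11 (T : H →L[ℂ] H) {x : H} (hx : ‖x‖ = 1) :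
    ‖⟪T x, x⟫_ℂ‖ ^ 2 ≤ (1 / 4) * ‖adjoint T * T + T * adjoint T‖
      + (1 / 4) * (‖(2 : ℂ)⁻¹ • (T + adjoint T) + (2 * I)⁻¹ • (T - adjoint T)‖ ^ 2
                   + ‖(2 : ℂ)⁻¹ • (T + adjoint T) - (2 * I)⁻¹ • (T - adjoint T)‖ ^ 2) := by
  set A := (2 : ℂ)⁻¹ • (T + adjoint T)
  set B := (2 * I)⁻¹ • (T - adjoint T)
  have hA : IsSelfAdjoint A := isSelfAdjoint_two_inv_smul_add_adjoint T
  have hB : IsSelfAdjoint B := isSelfAdjoint_two_mul_I_inv_smul_sub_adjoint T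
  have hT : A + I • B = T := two_inv_smul_add_adjoint_add_I_smul T
  have hT' : A - I • B = adjoint T := by rw [← adjoint_add_I_smul hA hB, hT]
  have hinner := norm_inner_add_I_smul_apply_sq_le hA hB x
  have hpar := norm_add_I_smul_apply_sq_add_norm_sub_I_smul_apply_sq A B x
  have hsum := norm_apply_sq_add_norm_adjoint_apply_sq_le T x
  have hdiff := two_mul_norm_apply_sq_add_norm_apply_sq_le A B x
  rw [hT] at hinner hpar
  rw [hT'] at hpar
  rw [hx] at hinner hsum hdiff
  linarith

end

theorem stmt_11 {H : Type*} [NormedAddCommGroup H] [InnerProductSpace ℂ H] [CompleteSpace H]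
    (T : H →L[ℂ] H) :
    nr T ^ 2 ≤ (1 / 4) * ‖adjoint T * T + T * adjoint T‖
      + (1 / 4) * (‖(2 : ℂ)⁻¹ • (T + adjoint T) + (2 * Complex.I)⁻¹ • (T - adjoint T)‖ ^ 2
                   + ‖(2 : ℂ)⁻¹ • (T + adjoint T) - (2 * Complex.I)⁻¹ • (T - adjoint T)‖ ^ 2) :=
  nr_sq_le (by positivity) fun _ hx ↦ norm_inner_apply_self_sq_le_s11 T hx
end

section
/- For bounded linear operators B and C on a complex Hilbert space H, w_e(B,C)² ≤ (1/2)·‖B*B + C*C + BB* + CC*‖. -/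
/-!
For a unit vector `x`, Cauchy–Schwarz bounds `|⟨T x, x⟩|` both by `‖T x‖` and, moving `T` across
the inner product, by `‖T* x‖`; hence `|⟨T x, x⟩|² ≤ ‖T x‖ ‖T* x‖ ≤ (‖T x‖² + ‖T* x‖²) / 2`.
Summing this for `B` and `C`, the right-hand side is `⟨S x, x⟩ / 2` with
`S = B*B + C*C + BB* + CC*`, which is at most `‖S‖ / 2`.
-/

open ContinuousLinearMap

open scoped InnerProductSpace

section InnerProductSpace

variable {𝕜 E : Type*} [RCLike 𝕜] [NormedAddCommGroup E] [InnerProductSpace 𝕜 E]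

theorem re_inner_apply_self_le_opNorm_mul_sq (S : E →L[𝕜] E) (x : E) :
    RCLike.re ⟪S x, x⟫_𝕜 ≤ ‖S‖ * ‖x‖ ^ 2 :=
  calc RCLike.re ⟪S x, x⟫_𝕜 ≤ ‖S x‖ * ‖x‖ := re_inner_le_norm _ _
    _ ≤ ‖S‖ * ‖x‖ * ‖x‖ := by gcongr; exact S.le_opNorm x
    _ = ‖S‖ * ‖x‖ ^ 2 := by ring

variable [CompleteSpace E]

theorem norm_inner_apply_self_le_norm_adjoint_apply (T : E →L[𝕜] E) (x : E) :
    ‖⟪T x, x⟫_𝕜‖ ≤ ‖adjoint T x‖ * ‖x‖ := by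
  rw [← adjoint_inner_right, norm_inner_symm]
  exact norm_inner_le_norm _ _

theorem two_mul_norm_inner_apply_self_sq_le (T : E →L[𝕜] E) (x : E) :
    2 * ‖⟪T x, x⟫_𝕜‖ ^ 2 ≤ (‖T x‖ ^ 2 + ‖adjoint T x‖ ^ 2) * ‖x‖ ^ 2 := by
  have h₁ : ‖⟪T x, x⟫_𝕜‖ ≤ ‖T x‖ * ‖x‖ := norm_inner_le_norm _ _
  have h₂ := norm_inner_apply_self_le_norm_adjoint_apply T x
  calc 2 * ‖⟪T x, x⟫_𝕜‖ ^ 2 = 2 * (‖⟪T x, x⟫_𝕜‖ * ‖⟪T x, x⟫_𝕜‖) := by ring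
    _ ≤ 2 * ((‖T x‖ * ‖x‖) * (‖adjoint T x‖ * ‖x‖)) := by gcongr
    _ ≤ (‖T x‖ ^ 2 + ‖adjoint T x‖ ^ 2) * ‖x‖ ^ 2 := by
      nlinarith [mul_nonneg (sq_nonneg (‖T x‖ - ‖adjoint T x‖)) (sq_nonneg ‖x‖)]

theorem re_inner_adjoint_mul_self_apply (T : E →L[𝕜] E) (x : E) :
    RCLike.re ⟪(adjoint T * T) x, x⟫_𝕜 = ‖T x‖ ^ 2 :=
  (apply_norm_sq_eq_inner_adjoint_left T x).symm

theorem re_inner_mul_adjoint_apply (T : E →L[𝕜] E) (x : E) :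
    RCLike.re ⟪(T * adjoint T) x, x⟫_𝕜 = ‖adjoint T x‖ ^ 2 := by
  simpa using re_inner_adjoint_mul_self_apply (adjoint T) x

end InnerProductSpace

theorem er_sq_le {E : Type*} [NormedAddCommGroup E] [InnerProductSpace ℂ E]
    (B C : E →L[ℂ] E) {c : ℝ} (hc : 0 ≤ c)
    (h : ∀ x : E, ‖x‖ = 1 → ‖⟪B x, x⟫_ℂ‖ ^ 2 + ‖⟪C x, x⟫_ℂ‖ ^ 2 ≤ c) :
    er B C ^ 2 ≤ c := by
  have h_nonneg : 0 ≤ er B C := Real.sSup_nonneg <| by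
    rintro r ⟨x, -, rfl⟩
    exact Real.sqrt_nonneg _
  have h_le : er B C ≤ √c := Real.sSup_le (by
    rintro r ⟨x, hx, rfl⟩
    exact Real.sqrt_le_sqrt (h x hx)) (Real.sqrt_nonneg c)
  calc er B C ^ 2 ≤ √c ^ 2 := by gcongr
    _ = c := Real.sq_sqrt hc

theorem stmt_12 {H : Type*} [NormedAddCommGroup H] [InnerProductSpace ℂ H] [CompleteSpace H]
    (B C : H →L[ℂ] H) :
    (er B C) ^ 2 ≤ (1 / 2) * ‖adjoint B * B + adjoint C * C + B * adjoint B + C * adjoint C‖ := by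
  set S := adjoint B * B + adjoint C * C + B * adjoint B + C * adjoint C
  refine er_sq_le B C (by positivity) fun x hx ↦ ?_
  have hB := two_mul_norm_inner_apply_self_sq_le B x
  have hC := two_mul_norm_inner_apply_self_sq_le C x
  have hS : RCLike.re ⟪S x, x⟫_ℂ =
      ‖B x‖ ^ 2 + ‖C x‖ ^ 2 + ‖adjoint B x‖ ^ 2 + ‖adjoint C x‖ ^ 2 := by
    simp only [S, add_apply, inner_add_left, map_add, re_inner_adjoint_mul_self_apply,
      re_inner_mul_adjoint_apply]
  have hS_le := re_inner_apply_self_le_opNorm_mul_sq S x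
  rw [hx] at hB hC hS_le
  linarith
end

section
/- For X, Y bounded linear operators on a complex Hilbert space H, w(XY) ≤ w((0, X; Y, 0))², where (0, X; Y, 0) denotes the off-diagonal 2×2 operator matrix on H ⊕ H. -/
open ContinuousLinearMap

/-!
Fix a unit vector `x`, put `y = Y x`, `n = ‖y‖`, `c = ⟪X y, x⟫`, and choose a unimodular `u` with
`conj u * c = |c| u`. Testing `T` at `z = (n x, u y)` gives `⟪T z, z⟫ = n u (|c| + n²)` while
`‖z‖² = 2 n²`, so `|c| + n² ≤ 2 w(T) n ≤ w(T)² + n²`. This avoids the power inequality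
`w(S²) ≤ w(S)²` applied to `T² = XY ⊕ YX`.
-/

open scoped InnerProductSpace ComplexConjugate

theorem Complex.exists_norm_eq_one_conj_mul_eq (c : ℂ) :
    ∃ u : ℂ, ‖u‖ = 1 ∧ conj u * c = ‖c‖ * u := by
  obtain ⟨v, rfl⟩ := IsAlgClosed.exists_eq_mul_self c
  rcases eq_or_ne v 0 with rfl | hv
  · exact ⟨1, by simp, by simp⟩
  refine ⟨v / ‖v‖, by simp [hv], ?_⟩
  calc conj (v / ‖v‖) * (v * v) = conj v * v * v / ‖v‖ := by
        rw [map_div₀, Complex.conj_ofReal]; ring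
    _ = ‖v * v‖ * (v / ‖v‖) := by
        rw [Complex.conj_mul', norm_mul]; push_cast; ring

section NumericalRadius

variable {E : Type*} [NormedAddCommGroup E] [InnerProductSpace ℂ E] (T : E →L[ℂ] E)

theorem bddAbove_nr_set :
    BddAbove {r : ℝ | ∃ x : E, ‖x‖ = 1 ∧ r = ‖⟪T x, x⟫_ℂ‖} := by
  refine ⟨‖T‖, ?_⟩
  rintro r ⟨x, hx, rfl⟩
  simpa [hx] using (norm_inner_le_norm (𝕜 := ℂ) (T x) x).trans
    (mul_le_mul_of_nonneg_right (T.le_opNorm x) (norm_nonneg x))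

theorem norm_inner_apply_self_le_nr_s18 {x : E} (hx : ‖x‖ = 1) : ‖⟪T x, x⟫_ℂ‖ ≤ nr T :=
  le_csSup (bddAbove_nr_set T) ⟨x, hx, rfl⟩

theorem norm_inner_apply_self_le_nr_mul_sq (x : E) : ‖⟪T x, x⟫_ℂ‖ ≤ nr T * ‖x‖ ^ 2 := by
  rcases eq_or_ne x 0 with rfl | hx
  · simp
  have hunit : ‖(‖x‖⁻¹ : ℂ) • x‖ = 1 := by
    rw [norm_smul, norm_inv, Complex.norm_real, norm_norm, inv_mul_cancel₀ (norm_ne_zero_iff.mpr hx)]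
  have := norm_inner_apply_self_le_nr_s18 T hunit
  rw [map_smul, inner_smul_left, inner_smul_right, norm_mul, norm_mul, map_inv₀,
    Complex.conj_ofReal, norm_inv, Complex.norm_real, norm_norm] at this
  have hpos : 0 < ‖x‖ := norm_pos_iff.mpr hx
  rw [← div_le_iff₀ (by positivity)]
  calc ‖⟪T x, x⟫_ℂ‖ / ‖x‖ ^ 2 = ‖x‖⁻¹ * (‖x‖⁻¹ * ‖⟪T x, x⟫_ℂ‖) := by field_simp
    _ ≤ nr T := this

theorem nr_le_of_forall {b : ℝ} (hb : 0 ≤ b) (h : ∀ x : E, ‖x‖ = 1 → ‖⟪T x, x⟫_ℂ‖ ≤ b) :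
    nr T ≤ b :=
  Real.sSup_le (by rintro r ⟨x, hx, rfl⟩; exact h x hx) hb

end NumericalRadius

section OffDiagonal

variable {H : Type*} [NormedAddCommGroup H] [InnerProductSpace ℂ H]
  {X Y : H →L[ℂ] H} {T : WithLp 2 (H × H) →L[ℂ] WithLp 2 (H × H)}

theorem inner_apply_self_of_offDiag
    (hT : ∀ x y : H, T ((WithLp.equiv 2 (H × H)).symm (x, y))
        = (WithLp.equiv 2 (H × H)).symm (X y, Y x)) (x y : H) :
    ⟪T ((WithLp.equiv 2 (H × H)).symm (x, y)), (WithLp.equiv 2 (H × H)).symm (x, y)⟫_ℂ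
      = ⟪X y, x⟫_ℂ + ⟪Y x, y⟫_ℂ := by
  rw [hT, WithLp.prod_inner_apply]
  rfl

theorem norm_inner_mul_apply_self_le_nr_sq
    (hT : ∀ x y : H, T ((WithLp.equiv 2 (H × H)).symm (x, y))
        = (WithLp.equiv 2 (H × H)).symm (X y, Y x)) {x : H} (hx : ‖x‖ = 1) :
    ‖⟪(X * Y) x, x⟫_ℂ‖ ≤ nr T ^ 2 := by
  set y := Y x
  set n := ‖y‖
  set c := ⟪X y, x⟫_ℂ
  change ‖c‖ ≤ nr T ^ 2
  rcases (norm_nonneg y).eq_or_lt with hn | hn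
  · have : y = 0 := norm_eq_zero.mp hn.symm
    simpa [c, this] using sq_nonneg (nr T)
  obtain ⟨u, hu, huc⟩ := Complex.exists_norm_eq_one_conj_mul_eq c
  set z := (WithLp.equiv 2 (H × H)).symm ((n : ℂ) • x, u • y)
  have hTz : ⟪T z, z⟫_ℂ = n * u * (‖c‖ + n ^ 2) := by
    rw [inner_apply_self_of_offDiag hT, map_smul, map_smul, inner_smul_left, inner_smul_right,
      inner_smul_left, inner_smul_right, inner_self_eq_norm_sq_to_K, Complex.conj_ofReal]
    linear_combination (n : ℂ) * huc
  have hz : ‖z‖ ^ 2 = 2 * n ^ 2 := by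
    rw [WithLp.prod_norm_sq_eq_of_L2]
    simp only [z, n, WithLp.equiv_symm_apply, WithLp.toLp_fst, WithLp.toLp_snd, Complex.coe_smul,
      norm_smul, norm_norm, hx, hu, mul_one, one_mul]
    ring
  have key := norm_inner_apply_self_le_nr_mul_sq T z
  rw [hTz, hz, norm_mul, norm_mul, hu, Complex.norm_real, Real.norm_of_nonneg hn.le,
    ← Complex.ofReal_pow, ← Complex.ofReal_add, Complex.norm_real,
    Real.norm_of_nonneg (by positivity)] at key
  have hbound : ‖c‖ + n ^ 2 ≤ 2 * nr T * n := by nlinarith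
  nlinarith [sq_nonneg (nr T - n)]

end OffDiagonal

theorem stmt_18_general {H : Type*} [NormedAddCommGroup H] [InnerProductSpace ℂ H]
    (X Y : H →L[ℂ] H) (T : WithLp 2 (H × H) →L[ℂ] WithLp 2 (H × H))
    (hT : ∀ x y : H, T ((WithLp.equiv 2 (H × H)).symm (x, y))
        = (WithLp.equiv 2 (H × H)).symm (X y, Y x)) :
    nr (X * Y) ≤ (nr T) ^ 2 :=
  nr_le_of_forall _ (sq_nonneg _) fun _ hx ↦ norm_inner_mul_apply_self_le_nr_sq hT hx

theorem stmt_18 {H : Type*} [NormedAddCommGroup H] [InnerProductSpace ℂ H] [CompleteSpace H]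
    (X Y : H →L[ℂ] H) (T : WithLp 2 (H × H) →L[ℂ] WithLp 2 (H × H))
    (hT : ∀ x y : H, T ((WithLp.equiv 2 (H × H)).symm (x, y))
        = (WithLp.equiv 2 (H × H)).symm (X y, Y x)) :
    nr (X * Y) ≤ (nr T) ^ 2 :=
  stmt_18_general X Y T hT
end
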